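/- Let T be a finite set of tile types, k ≥ 2, and let top, bot, left, right be sequences of k colors. Then there exists a square tiling for (T, top, bot, left, right) if and only if the goal configuration c_goal = ((k+1,0),(k+1,1),…,(k+1,k+1)) is reachable in the square-reduction topologic graph G_sq with k+2 UAVs by an execution of length at most k+2. -/

import Mathlib

/-- A topologic graph: a finite set of regions with a base `B`, a move relation `→`
and a symmetric communication relation `⟷`, such that `B → B`. -/
structure TopGraph (V : Type) where
  base : V
  move : V → V → Prop
  comm : V → V → Prop
  comm_symm : ∀ v w : V, comm v w → comm w v
  base_move : move base base

namespace TopGraph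

variable {V : Type} {n : ℕ}

/-- The communication graph restricted to the occupied nodes together with the base is
connected: every occupied node is reachable from the base via communication edges whose
endpoints are occupied (or the base). -/
def ConnectedToBase (G : TopGraph V) (c : Fin n → V) : Prop :=
  ∀ i : Fin n,
    Relation.ReflTransGen
      (fun x y =>
        (x = G.base ∨ ∃ j, c j = x) ∧ (y = G.base ∨ ∃ j, c j = y) ∧ G.comm x y)
      G.base (c i)

/-- A configuration for `n` UAVs. -/
def IsConfig (G : TopGraph V) (c : Fin n → V) : Prop :=
  G.ConnectedToBase c ∧ ∀ i j : Fin n, i ≠ j → c i ≠ G.base → c i ≠ c j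

/-- An execution of length `ℓ` with `n` UAVs. -/
def IsExecution (G : TopGraph V) (n ℓ : ℕ) (d : ℕ → Fin n → V) : Prop :=
  (∀ t, t ≤ ℓ → G.IsConfig (d t)) ∧
  (∀ t, t < ℓ → ∀ i : Fin n, G.move (d t i) (d (t + 1) i))

/-- A covering execution: starts and ends with all UAVs at the base, and visits all nodes. -/
def IsCovering (G : TopGraph V) (n ℓ : ℕ) (d : ℕ → Fin n → V) : Prop :=
  G.IsExecution n ℓ d ∧
  (∀ i, d 0 i = G.base) ∧ (∀ i, d ℓ i = G.base) ∧
  (∀ v : V, ∃ t, t ≤ ℓ ∧ ∃ i, d t i = v)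

/-- A configuration is reachable if some execution from the all-base configuration ends in it. -/
def Reachable (G : TopGraph V) (c : Fin n → V) : Prop :=
  ∃ ℓ, ∃ d : ℕ → Fin n → V,
    G.IsExecution n ℓ d ∧ (∀ i, d 0 i = G.base) ∧ d ℓ = c

/-- Reachability by an execution of length at most `L`. -/
def ReachableIn (G : TopGraph V) (c : Fin n → V) (L : ℕ) : Prop :=
  ∃ ℓ, ℓ ≤ L ∧ ∃ d : ℕ → Fin n → V,
    G.IsExecution n ℓ d ∧ (∀ i, d 0 i = G.base) ∧ d ℓ = c

/-- Neighbor-communicable: if a UAV can move from `v` to `v'`, then `v` and `v'` can communicate. -/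
def NeighborCommunicable (G : TopGraph V) : Prop :=
  ∀ v w : V, G.move v w → G.comm v w

end TopGraph
/-- A tile type: four colors (naturals). -/
structure Tile where
  left : ℕ
  up : ℕ
  right : ℕ
  down : ℕ
deriving DecidableEq

/-- The color white. -/
def white : ℕ := 0
/-! The square-reduction topologic graph. Tile nodes `(t, i)` have column `i+1 ∈ {1,…,k}`
encoded by `i : Fin k`. Boundary nodes are pairs `(row, column) ∈ {0,…,k+1}²` with row or
column in `{0, k+1}`, encoded as a subtype of `Fin (k+2) × Fin (k+2)`. The base is `none`. -/

/-- Boundary nodes `Bd` of the square-reduction graph. -/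
abbrev SqBd (k : ℕ) : Type :=
  {p : Fin (k + 2) × Fin (k + 2) //
    p.1.val = 0 ∨ p.1.val = k + 1 ∨ p.2.val = 0 ∨ p.2.val = k + 1}

/-- Non-base nodes of the square-reduction graph. -/
abbrev SqInner (T : Finset Tile) (k : ℕ) : Type := ({t : Tile // t ∈ T} × Fin k) ⊕ SqBd k

/-- Nodes of the square-reduction graph (`none` is the base). -/
abbrev SqNode (T : Finset Tile) (k : ℕ) : Type := Option (SqInner T k)

/-- Moves of the square-reduction graph. -/
def sqMove (T : Finset Tile) (k : ℕ) (top bot : Fin k → ℕ) :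
    SqNode T k → SqNode T k → Prop := fun x y =>
  (x = none ∧ y = none) ∨
  (x = none ∧ ∃ b : SqBd k, y = some (Sum.inr b) ∧ b.val.1.val = 0) ∨
  (∃ q q' : {t : Tile // t ∈ T} × Fin k, x = some (Sum.inl q) ∧ y = some (Sum.inl q') ∧
    q.2 = q'.2 ∧ q.1.val.up = q'.1.val.down) ∨
  (∃ (b : SqBd k) (q : {t : Tile // t ∈ T} × Fin k), x = some (Sum.inr b) ∧
    y = some (Sum.inl q) ∧ b.val.1.val = 0 ∧ b.val.2.val = q.2.val + 1 ∧
    q.1.val.down = bot q.2) ∨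
  (∃ (q : {t : Tile // t ∈ T} × Fin k) (b : SqBd k), x = some (Sum.inl q) ∧
    y = some (Sum.inr b) ∧ b.val.1.val = k + 1 ∧ b.val.2.val = q.2.val + 1 ∧
    q.1.val.up = top q.2) ∨
  (∃ b b' : SqBd k, x = some (Sum.inr b) ∧ y = some (Sum.inr b') ∧
    b'.val.1.val = b.val.1.val + 1 ∧ b.val.2 = b'.val.2 ∧
    (b.val.2.val = 0 ∨ b.val.2.val = k + 1))

/-- One direction of the communications of the square-reduction graph. -/
def sqComm0 (T : Finset Tile) (k : ℕ) (lef rig : Fin k → ℕ) :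
    SqNode T k → SqNode T k → Prop := fun x y =>
  (x = none ∧ ∃ b : SqBd k, y = some (Sum.inr b) ∧ b.val.2.val = 0) ∨
  (∃ q q' : {t : Tile // t ∈ T} × Fin k, x = some (Sum.inl q) ∧ y = some (Sum.inl q') ∧
    q'.2.val = q.2.val + 1 ∧ q.1.val.right = q'.1.val.left) ∨
  (∃ b b' : SqBd k, x = some (Sum.inr b) ∧ y = some (Sum.inr b') ∧
    b.val.1 = b'.val.1 ∧ (b.val.1.val = 0 ∨ b.val.1.val = k + 1) ∧
    b'.val.2.val = b.val.2.val + 1) ∨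
  (∃ (b : SqBd k) (q : {t : Tile // t ∈ T} × Fin k) (jf : Fin k),
    x = some (Sum.inr b) ∧ y = some (Sum.inl q) ∧
    b.val.2.val = 0 ∧ b.val.1.val = jf.val + 1 ∧ q.2.val = 0 ∧ q.1.val.left = lef jf) ∨
  (∃ (b : SqBd k) (q : {t : Tile // t ∈ T} × Fin k) (jf : Fin k),
    x = some (Sum.inr b) ∧ y = some (Sum.inl q) ∧
    b.val.2.val = k + 1 ∧ b.val.1.val = jf.val + 1 ∧ q.2.val = k - 1 ∧ q.1.val.right = rig jf)

/-- The square-reduction topologic graph `G_sq`. -/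
def sqGraph (T : Finset Tile) (k : ℕ) (top bot lef rig : Fin k → ℕ) :
    TopGraph (SqNode T k) where
  base := none
  move := sqMove T k top bot
  comm := fun x y => sqComm0 T k lef rig x y ∨ sqComm0 T k lef rig y x
  comm_symm := fun _ _ h => h.symm
  base_move := Or.inl ⟨rfl, rfl⟩

/-- The goal configuration `((k+1,0), (k+1,1), …, (k+1,k+1))` for `k+2` UAVs. -/
def sqGoal (T : Finset Tile) (k : ℕ) : Fin (k + 2) → SqNode T k :=
  fun j => some (Sum.inr ⟨(⟨k + 1, by omega⟩, j), Or.inr (Or.inl rfl)⟩)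

/-- A square tiling of the `k × k` square (row `i+1` encoded by `i : Fin k`, bottom row
first; column `j+1` encoded by `j : Fin k`). -/
def IsSquareTiling (T : Finset Tile) (k : ℕ) (top bot lef rig : Fin k → ℕ)
    (lam : Fin k → Fin k → Tile) : Prop :=
  (∀ (i j : Fin k), lam i j ∈ T) ∧
  (∀ (i : Fin k) (j j' : Fin k), j'.val = j.val + 1 → (lam i j).right = (lam i j').left) ∧
  (∀ (i i' : Fin k) (j : Fin k), i'.val = i.val + 1 → (lam i j).up = (lam i' j).down) ∧
  (∀ (i j : Fin k), i.val = 0 → (lam i j).down = bot j) ∧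
  (∀ (i j : Fin k), i.val = k - 1 → (lam i j).up = top j) ∧
  (∀ (i j : Fin k), j.val = 0 → (lam i j).left = lef i) ∧
  (∀ (i j : Fin k), j.val = k - 1 → (lam i j).right = rig i)
/-!
UAV `j` can only ever occupy column `j` (moves keep the column of a non-base node, and the goal
puts UAV `j` in column `j`), and the two side UAVs climb their boundary columns by at most one row
per step, so an execution of length at most `k + 2` has length exactly `k + 2` and puts both side
UAVs on row `r` at time `r + 1`. For `1 ≤ r ≤ k` the configuration at that time is connected, and
the communication path from the base to the right side UAV must cross every column; since the side
node `(r, 0)` communicates, apart from the base, only with tiles, the crossings force the middle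
UAVs onto a row of tiles matching horizontally and with `left r`, `right r`. Moves between
consecutive rows give the vertical, bottom and top constraints. Conversely, a tiling is swept row
by row, the boundary rows `0` and `k + 1` included.
-/

namespace Relation.ReflTransGen

theorem exists_crossing {α : Type*} {r : α → α → Prop} {p : α → Prop} {a b : α}
    (h : ReflTransGen r a b) (ha : p a) (hb : ¬p b) : ∃ x y, r x y ∧ p x ∧ ¬p y := by
  induction h with
  | refl => exact absurd ha hb
  | @tail y z _ hyz ih =>
    by_cases hy : p y
    · exact ⟨y, z, hyz, hy, hb⟩
    · exact ih hy

end Relation.ReflTransGen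

namespace TopGraph

variable {V : Type} (G : TopGraph V)

theorem isConfig_base {n : ℕ} : G.IsConfig (fun _ : Fin n => G.base) :=
  ⟨fun _ => .refl, fun _ _ _ h => absurd rfl h⟩

theorem connectedToBase_of_chain {n : ℕ} {c : Fin (n + 1) → V} (h0 : G.comm G.base (c 0))
    (hstep : ∀ m : Fin n, G.comm (c m.castSucc) (c m.succ)) : G.ConnectedToBase c := by
  intro i
  induction i using Fin.induction with
  | zero => exact .single ⟨Or.inl rfl, Or.inr ⟨0, rfl⟩, h0⟩
  | succ m ih => exact ih.tail ⟨Or.inr ⟨_, rfl⟩, Or.inr ⟨_, rfl⟩, hstep m⟩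

theorem isConfig_of_chain {n : ℕ} {c : Fin (n + 1) → V} (h0 : G.comm G.base (c 0))
    (hstep : ∀ m : Fin n, G.comm (c m.castSucc) (c m.succ)) (hc : Function.Injective c) :
    G.IsConfig c :=
  ⟨G.connectedToBase_of_chain h0 hstep, fun _ _ hij _ => hc.ne hij⟩

/-- The path from the base to the last UAV has to cross from layer `m` to layer `m + 1`, and
the endpoints of that edge can only be UAVs `m` and `m + 1`. -/
theorem comm_succ_of_layered (f : V → ℕ) (hf : ∀ x y, G.comm x y → f y ≤ f x + 1)
    (hbase : f G.base = 0) (hbase_comm : ∀ y, G.comm G.base y → f y = 0) {n : ℕ}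
    {c : Fin (n + 1) → V} (hconn : G.ConnectedToBase c) (hc : ∀ j, c j = G.base ∨ f (c j) = j)
    (hlast : c (Fin.last n) ≠ G.base) (m : Fin n) :
    f (c m.succ) = m + 1 ∧ G.comm (c m.castSucc) (c m.succ) := by
  have hflast : f (c (Fin.last n)) = n := (hc _).resolve_left hlast
  obtain ⟨x, y, ⟨hx, hy, hxy⟩, hxm, hym⟩ :=
    (hconn (Fin.last n)).exists_crossing (p := fun x => f x ≤ m) (by simp [hbase])
      (by simp only [hflast, not_le]; exact m.isLt)
  have hfx : f x = m := by have := hf x y hxy; omega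
  have hfy : f y = m + 1 := by have := hf x y hxy; omega
  have hxb : x ≠ G.base := by rintro rfl; have := hbase_comm y hxy; omega
  have hyc : y = c m.succ := by
    rcases hy with rfl | ⟨j, rfl⟩
    · omega
    · rcases hc j with h | h
      · rw [h] at hfy; omega
      · exact congrArg c (Fin.ext (by simp; omega))
  have hxc : x = c m.castSucc := by
    rcases hx with rfl | ⟨j, rfl⟩
    · exact absurd rfl hxb
    · have h := (hc j).resolve_left hxb
      exact congrArg c (Fin.ext (by simp; omega))
  exact ⟨hyc ▸ hfy, hxc ▸ hyc ▸ hxy⟩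

end TopGraph

section SquareReduction

variable {T : Finset Tile} {k : ℕ} {top bot lef rig : Fin k → ℕ}

@[simp] theorem sqGraph_base : (sqGraph T k top bot lef rig).base = none := rfl

@[simp] theorem sqGraph_move : (sqGraph T k top bot lef rig).move = sqMove T k top bot := rfl

theorem sqGraph_comm_iff {x y : SqNode T k} :
    (sqGraph T k top bot lef rig).comm x y ↔ sqComm0 T k lef rig x y ∨ sqComm0 T k lef rig y x :=
  Iff.rfl

@[simp] theorem sqComm0_none_right (x : SqNode T k) : ¬sqComm0 T k lef rig x none := by
  simp [sqComm0]

@[simp] theorem sqComm0_none_inl (q : {t // t ∈ T} × Fin k) :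
    ¬sqComm0 T k lef rig none (some (.inl q)) := by
  simp [sqComm0]

@[simp] theorem sqComm0_none_inr (b : SqBd k) :
    sqComm0 T k lef rig none (some (.inr b)) ↔ b.val.2.val = 0 := by
  simp only [sqComm0, reduceCtorEq, false_and, exists_false, or_false, Option.some.injEq,
    Sum.inr.injEq, exists_eq_left', true_and]

@[simp] theorem sqComm0_inl_inl (q q' : {t // t ∈ T} × Fin k) :
    sqComm0 T k lef rig (some (.inl q)) (some (.inl q')) ↔
      q'.2.val = q.2.val + 1 ∧ q.1.val.right = q'.1.val.left := by
  simp only [sqComm0, reduceCtorEq, false_and, exists_false, false_or, or_false,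
    Option.some.injEq, Sum.inl.injEq, exists_and_left, exists_eq_left']

@[simp] theorem sqComm0_inl_inr (q : {t // t ∈ T} × Fin k) (b : SqBd k) :
    ¬sqComm0 T k lef rig (some (.inl q)) (some (.inr b)) := by
  simp [sqComm0]

@[simp] theorem sqComm0_inr_inl (b : SqBd k) (q : {t // t ∈ T} × Fin k) :
    sqComm0 T k lef rig (some (.inr b)) (some (.inl q)) ↔
      (b.val.2.val = 0 ∧ ∃ r : Fin k, b.val.1.val = r + 1 ∧ q.2.val = 0 ∧ q.1.val.left = lef r) ∨
      (b.val.2.val = k + 1 ∧ ∃ r : Fin k, b.val.1.val = r + 1 ∧ q.2.val = k - 1 ∧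
        q.1.val.right = rig r) := by
  simp only [sqComm0, reduceCtorEq, false_and, exists_false, false_or, Option.some.injEq,
    Sum.inr.injEq, Sum.inl.injEq, exists_and_left, exists_eq_left']

@[simp] theorem sqComm0_inr_inr (b b' : SqBd k) :
    sqComm0 T k lef rig (some (.inr b)) (some (.inr b')) ↔
      b.val.1 = b'.val.1 ∧ (b.val.1.val = 0 ∨ b.val.1.val = k + 1) ∧
        b'.val.2.val = b.val.2.val + 1 := by
  simp only [sqComm0, reduceCtorEq, false_and, exists_false, false_or, or_false,
    Option.some.injEq, Sum.inr.injEq, exists_and_left, exists_eq_left']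

@[simp] theorem sqMove_none_right_iff (x : SqNode T k) : sqMove T k top bot x none ↔ x = none := by
  simp [sqMove]

@[simp] theorem sqMove_none_inl (q : {t // t ∈ T} × Fin k) :
    ¬sqMove T k top bot none (some (.inl q)) := by
  simp [sqMove]

@[simp] theorem sqMove_none_inr (b : SqBd k) :
    sqMove T k top bot none (some (.inr b)) ↔ b.val.1.val = 0 := by
  simp only [sqMove, reduceCtorEq, false_and, exists_false, false_or, or_false, Option.some.injEq,
    Sum.inr.injEq, exists_eq_left', true_and]

@[simp] theorem sqMove_inl_inl (q q' : {t // t ∈ T} × Fin k) :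
    sqMove T k top bot (some (.inl q)) (some (.inl q')) ↔
      q.2 = q'.2 ∧ q.1.val.up = q'.1.val.down := by
  simp only [sqMove, reduceCtorEq, false_and, exists_false, false_or, or_false,
    Option.some.injEq, Sum.inl.injEq, exists_and_left, exists_eq_left']

@[simp] theorem sqMove_inl_inr (q : {t // t ∈ T} × Fin k) (b : SqBd k) :
    sqMove T k top bot (some (.inl q)) (some (.inr b)) ↔
      b.val.1.val = k + 1 ∧ b.val.2.val = q.2.val + 1 ∧ q.1.val.up = top q.2 := by
  simp only [sqMove, reduceCtorEq, false_and, exists_false, false_or, or_false,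
    Option.some.injEq, Sum.inl.injEq, Sum.inr.injEq, exists_and_left, exists_eq_left']

@[simp] theorem sqMove_inr_inl (b : SqBd k) (q : {t // t ∈ T} × Fin k) :
    sqMove T k top bot (some (.inr b)) (some (.inl q)) ↔
      b.val.1.val = 0 ∧ b.val.2.val = q.2.val + 1 ∧ q.1.val.down = bot q.2 := by
  simp only [sqMove, reduceCtorEq, false_and, exists_false, false_or, or_false,
    Option.some.injEq, Sum.inl.injEq, Sum.inr.injEq, exists_and_left, exists_eq_left']

@[simp] theorem sqMove_inr_inr (b b' : SqBd k) :
    sqMove T k top bot (some (.inr b)) (some (.inr b')) ↔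
      b'.val.1.val = b.val.1.val + 1 ∧ b.val.2 = b'.val.2 ∧
        (b.val.2.val = 0 ∨ b.val.2.val = k + 1) := by
  simp only [sqMove, reduceCtorEq, false_and, exists_false, false_or,
    Option.some.injEq, Sum.inr.injEq, exists_and_left, exists_eq_left']

/-- The base is put in column `0`, next to the only nodes it communicates with. -/
def sqCol : SqNode T k → ℕ
  | none => 0
  | some (.inl q) => q.2.val + 1
  | some (.inr b) => b.val.2.val

def IsBdAt (x : SqNode T k) (r c : ℕ) : Prop :=
  ∃ b : SqBd k, x = some (.inr b) ∧ b.val.1.val = r ∧ b.val.2.val = c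

theorem sqCol_le_of_comm {x y : SqNode T k} (h : (sqGraph T k top bot lef rig).comm x y) :
    sqCol y ≤ sqCol x + 1 := by
  rw [sqGraph_comm_iff] at h
  rcases x with _ | q | b <;> rcases y with _ | q' | b' <;> simp [sqCol] at h ⊢ <;> grind

theorem sqCol_eq_zero_of_comm_base {y : SqNode T k}
    (h : (sqGraph T k top bot lef rig).comm none y) : sqCol y = 0 := by
  rw [sqGraph_comm_iff] at h
  rcases y with _ | q' | b' <;> simp_all [sqCol]

theorem exists_tile_of_comm_left_bd {b : SqBd k} {y : SqNode T k} {r : Fin k}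
    (h : (sqGraph T k top bot lef rig).comm (some (.inr b)) y) (hb2 : b.val.2.val = 0)
    (hb1 : b.val.1.val = r + 1) (hy : sqCol y = 1) :
    ∃ q, y = some (.inl q) ∧ q.1.val.left = lef r := by
  rw [sqGraph_comm_iff] at h
  rcases y with _ | q | b'
  · simp [sqCol] at hy
  · refine ⟨q, rfl, ?_⟩
    simp only [sqComm0_inr_inl, sqComm0_inl_inr, or_false] at h
    obtain ⟨-, r', hr', -, hleft⟩ | ⟨hb2', -⟩ := h
    · rwa [show r = r' from Fin.ext (by omega)]
    · omega
  · simp only [sqComm0_inr_inr] at h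
    have := r.isLt
    omega

theorem exists_tile_of_comm_tile {q : {t // t ∈ T} × Fin k} {y : SqNode T k}
    (h : (sqGraph T k top bot lef rig).comm (some (.inl q)) y) (hy : sqCol y = q.2.val + 2)
    (hk : q.2.val + 2 ≤ k) : ∃ q', y = some (.inl q') ∧ q.1.val.right = q'.1.val.left := by
  rw [sqGraph_comm_iff] at h
  rcases y with _ | q' | b
  · simp [sqCol] at hy
  · simp only [sqCol, sqComm0_inl_inl] at h hy
    exact ⟨q', rfl, by omega⟩
  · simp only [sqCol, sqComm0_inr_inl, sqComm0_inl_inr, false_or] at h hy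
    omega

theorem right_eq_of_comm_right_bd {q : {t // t ∈ T} × Fin k} {b : SqBd k} {r : Fin k}
    (h : (sqGraph T k top bot lef rig).comm (some (.inl q)) (some (.inr b)))
    (hb2 : b.val.2.val = k + 1) (hb1 : b.val.1.val = r + 1) : q.1.val.right = rig r := by
  simp only [sqGraph_comm_iff, sqComm0_inr_inl, sqComm0_inl_inr, false_or] at h
  obtain ⟨hb2', -⟩ | ⟨-, r', hr', -, hright⟩ := h
  · omega
  · rwa [show r = r' from Fin.ext (by omega)]

theorem sqCol_eq_of_sqMove {x y : SqNode T k} (h : sqMove T k top bot x y) :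
    x = none ∨ sqCol y = sqCol x := by
  rcases x with _ | q | b <;> rcases y with _ | q' | b' <;> simp [sqCol] at h ⊢ <;> grind

theorem isBdAt_of_sqMove_side {x : SqNode T k} {b : SqBd k} {r : ℕ}
    (h : sqMove T k top bot x (some (.inr b))) (hb1 : b.val.1.val = r + 1)
    (hb2 : b.val.2.val = 0 ∨ b.val.2.val = k + 1) : IsBdAt x r b.val.2.val := by
  rcases x with _ | q | b'
  · simp only [sqMove_none_inr] at h
    omega
  · simp only [sqMove_inl_inr] at h
    omega
  · simp only [sqMove_inr_inr] at h
    exact ⟨b', rfl, by omega, by rw [h.2.1]⟩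

section Execution

variable {l : ℕ} {d : ℕ → Fin (k + 2) → SqNode T k}

theorem sqCol_eq_of_isExecution (hd : (sqGraph T k top bot lef rig).IsExecution (k + 2) l d)
    (hend : d l = sqGoal T k) {t : ℕ} (ht : t ≤ l) (j : Fin (k + 2)) :
    d t j = none ∨ sqCol (d t j) = j := by
  induction ht using Nat.decreasingInduction generalizing j with
  | self => exact Or.inr (by rw [hend]; rfl)
  | of_succ t htl ih =>
    have hm : sqMove T k top bot (d t j) (d (t + 1) j) := hd.2 t htl j
    rcases ih j with h | h
    · rw [h] at hm
      exact Or.inl (by simpa using hm)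
    · exact (sqCol_eq_of_sqMove hm).imp_right fun h' => h'.symm.trans h

theorem isBdAt_side_of_isExecution (hd : (sqGraph T k top bot lef rig).IsExecution (k + 2) l d)
    (h0 : ∀ j, d 0 j = none) (hend : d l = sqGoal T k) (j : Fin (k + 2))
    (hj : j.val = 0 ∨ j.val = k + 1) {s : ℕ} (hs : s ≤ k + 1) :
    IsBdAt (d (l - s) j) (k + 1 - s) j := by
  have hpos : ∀ {t r c}, IsBdAt (d t j) r c → 0 < t := by
    rintro t r c ⟨b, hb, -⟩
    by_contra ht
    rw [show t = 0 by omega, h0] at hb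
    cases hb
  induction s with
  | zero => exact ⟨_, by rw [Nat.sub_zero, hend]; rfl, rfl, rfl⟩
  | succ s ih =>
    obtain ⟨b, hb, hb1, hb2⟩ := ih (by omega)
    have hsl : s < l := by have := hpos ⟨b, hb, hb1, hb2⟩; omega
    have hm : sqMove T k top bot (d (l - (s + 1)) j) (d (l - (s + 1) + 1) j) :=
      hd.2 (l - (s + 1)) (by omega) j
    rw [show l - (s + 1) + 1 = l - s by omega, hb] at hm
    rw [← hb2]
    exact isBdAt_of_sqMove_side hm (by omega) (by omega)

theorem le_length_of_isExecution (hd : (sqGraph T k top bot lef rig).IsExecution (k + 2) l d)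
    (h0 : ∀ j, d 0 j = none) (hend : d l = sqGoal T k) : k + 2 ≤ l := by
  obtain ⟨b, hb, -⟩ := isBdAt_side_of_isExecution hd h0 hend 0 (Or.inl rfl) le_rfl
  by_contra hl
  rw [show l - (k + 1) = 0 by omega, h0] at hb
  cases hb

theorem down_eq_bot_of_isExecution (hd : (sqGraph T k top bot lef rig).IsExecution (k + 2) l d)
    (hl : 2 ≤ l) (h0 : ∀ j, d 0 j = none) {j : Fin (k + 2)} {q : {t // t ∈ T} × Fin k}
    (hq : d 2 j = some (.inl q)) : q.1.val.down = bot q.2 := by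
  have h1 := hd.2 0 (by omega) j
  have h2 := hd.2 1 (by omega) j
  rw [h0] at h1
  rw [hq] at h2
  rcases hx : d 1 j with _ | q' | b <;> rw [hx] at h1 h2 <;> simp at h1 h2
  exact h2.2.2

end Execution

/-- Row `r + 1` is neither the bottom nor the top row, so the left side node talks only to a
tile, and each crossing edge given by `comm_succ_of_layered` is a matching tile edge. -/
theorem exists_row_of_connectedToBase {c : Fin (k + 2) → SqNode T k}
    (hconn : (sqGraph T k top bot lef rig).ConnectedToBase c)
    (hcol : ∀ j, c j = none ∨ sqCol (c j) = j) (r : Fin k)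
    (hL : IsBdAt (c 0) (r + 1) 0) (hR : IsBdAt (c (Fin.last (k + 1))) (r + 1) (k + 1)) :
    ∃ ρ : Fin k → {t // t ∈ T}, (∀ j : Fin k, c j.succ.castSucc = some (.inl (ρ j, j))) ∧
      (∀ j j' : Fin k, j'.val = j.val + 1 → (ρ j).val.right = (ρ j').val.left) ∧
      (∀ j : Fin k, j.val = 0 → (ρ j).val.left = lef r) ∧
      (∀ j : Fin k, j.val = k - 1 → (ρ j).val.right = rig r) := by
  obtain ⟨bL, hbL, hbL1, hbL2⟩ := hL
  obtain ⟨bR, hbR, hbR1, hbR2⟩ := hR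
  have hcomm := (sqGraph T k top bot lef rig).comm_succ_of_layered sqCol
    (fun _ _ => sqCol_le_of_comm) rfl (fun _ => sqCol_eq_zero_of_comm_base) hconn hcol
    (by rw [hbR]; simp)
  obtain ⟨q₀, hq₀, hleft⟩ : ∃ q, c 1 = some (.inl q) ∧ q.1.val.left = lef r := by
    obtain ⟨hy, hxy⟩ := hcomm 0
    rw [Fin.castSucc_zero, hbL, Fin.succ_zero_eq_one] at hxy
    exact exists_tile_of_comm_left_bd hxy hbL2 hbL1 (by simpa using hy)
  have hcol_tile : ∀ {j : Fin k} {q}, c j.succ.castSucc = some (.inl q) → q.2 = j := by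
    intro j q hq
    have h := (hcol j.succ.castSucc).resolve_left (by rw [hq]; simp)
    rw [hq] at h
    simp only [sqCol, Fin.val_castSucc, Fin.val_succ] at h
    exact Fin.ext (by omega)
  have htile : ∀ j : Fin k, ∃ q, c j.succ.castSucc = some (.inl q) := by
    rintro ⟨j, hj⟩
    induction j with
    | zero => exact ⟨q₀, hq₀⟩
    | succ j ih =>
      obtain ⟨q, hq⟩ := ih (by omega)
      obtain ⟨hy, hxy⟩ := hcomm (Fin.succ ⟨j, by omega⟩)
      have hq2 : q.2.val = j := congrArg Fin.val (hcol_tile hq)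
      simp only [Fin.val_succ] at hy
      rw [hq] at hxy
      exact (exists_tile_of_comm_tile hxy (by omega) (by omega)).imp fun _ => And.left
  choose q hq using htile
  refine ⟨fun j => (q j).1, fun j => ?_, fun j j' hj' => ?_, fun j hj0 => ?_, fun j hjk => ?_⟩
  · rw [show ((q j).1, j) = q j from Prod.ext rfl (hcol_tile (hq j)).symm]
    exact hq j
  · show (q j).1.val.right = (q j').1.val.left
    obtain ⟨-, hxy⟩ := hcomm j.succ
    rw [hq j, show j.succ.succ = j'.succ.castSucc from Fin.ext (by simp [hj']), hq j'] at hxy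
    simp only [sqGraph_comm_iff, sqComm0_inl_inl, hcol_tile (hq j), hcol_tile (hq j')] at hxy
    omega
  · rw [show (1 : Fin (k + 2)) = j.succ.castSucc from Fin.ext (by simp [hj0]), hq j] at hq₀
    cases hq₀
    exact hleft
  · obtain ⟨-, hxy⟩ := hcomm (Fin.last k)
    rw [show (Fin.last k).castSucc = j.succ.castSucc from Fin.ext (by simp; omega), hq j,
      Fin.succ_last, hbR] at hxy
    exact right_eq_of_comm_right_bd hxy hbR2 hbR1

theorem exists_isSquareTiling_of_reachableIn
    (h : (sqGraph T k top bot lef rig).ReachableIn (sqGoal T k) (k + 2)) :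
    ∃ lam, IsSquareTiling T k top bot lef rig lam := by
  obtain ⟨l, hl, d, hd, h0, hend⟩ := h
  obtain rfl : l = k + 2 := le_antisymm hl (le_length_of_isExecution hd h0 hend)
  have hside (j : Fin (k + 2)) (hj : j.val = 0 ∨ j.val = k + 1) (i : Fin k) :
      IsBdAt (d (i + 2) j) (i + 1) j := by
    simpa [show k + 2 - (k - i) = i + 2 by omega, show k + 1 - (k - i) = i + 1 by omega]
      using isBdAt_side_of_isExecution hd h0 hend j hj (s := k - i) (by omega)
  choose ρ hρ hhor hlef hrig using fun i : Fin k =>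
    exists_row_of_connectedToBase (hd.1 (i + 2) (by omega)).1
      (sqCol_eq_of_isExecution hd hend (by omega)) i (hside 0 (Or.inl rfl) i)
      (hside (Fin.last (k + 1)) (Or.inr rfl) i)
  refine ⟨fun i j => (ρ i j).1, fun i j => (ρ i j).2, hhor, fun i i' j hi => ?_, fun i j hi => ?_,
    fun i j hi => ?_, hlef, hrig⟩
  · have hm := hd.2 (i + 2) (by omega) j.succ.castSucc
    rw [hρ i j, show i.val + 2 + 1 = i' + 2 by omega, hρ i' j] at hm
    simpa using hm
  · simpa using down_eq_bot_of_isExecution hd (by omega) h0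
      (by rw [show 2 = i.val + 2 by omega]; exact hρ i j)
  · have hm := hd.2 (i + 2) (by omega) j.succ.castSucc
    rw [hρ i j, show i.val + 2 + 1 = k + 2 by omega, hend] at hm
    simpa [sqGoal] using hm

def gridNode (lam : Fin k → Fin k → Tile) (hmem : ∀ i j, lam i j ∈ T) (i j : Fin (k + 2)) :
    SqNode T k :=
  if h : i.val = 0 ∨ i.val = k + 1 ∨ j.val = 0 ∨ j.val = k + 1 then some (.inr ⟨(i, j), h⟩)
  else some (.inl (⟨lam ⟨i - 1, by omega⟩ ⟨j - 1, by omega⟩, hmem _ _⟩, ⟨j - 1, by omega⟩))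

def tilingRun (lam : Fin k → Fin k → Tile) (hmem : ∀ i j, lam i j ∈ T) :
    ℕ → Fin (k + 2) → SqNode T k
  | 0 => fun _ => none
  | t + 1 => gridNode lam hmem (Fin.clamp t (k + 1))

section Grid

variable {lam : Fin k → Fin k → Tile}

theorem sqCol_gridNode (hmem : ∀ i j, lam i j ∈ T) (i j : Fin (k + 2)) :
    sqCol (gridNode lam hmem i j) = j := by
  unfold gridNode
  split_ifs
  · rfl
  · simp only [sqCol]
    omega

theorem sqGraph_comm_base_gridNode (hmem : ∀ i j, lam i j ∈ T) (i : Fin (k + 2)) :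
    (sqGraph T k top bot lef rig).comm none (gridNode lam hmem i 0) := by
  simp [gridNode, sqGraph_comm_iff]

theorem sqMove_base_gridNode (hmem : ∀ i j, lam i j ∈ T) (j : Fin (k + 2)) :
    sqMove T k top bot none (gridNode lam hmem 0 j) := by
  simp [gridNode]

theorem gridNode_last (hmem : ∀ i j, lam i j ∈ T) :
    gridNode lam hmem (Fin.last (k + 1)) = sqGoal T k := by
  funext j
  simp [gridNode, sqGoal, Fin.last]

theorem sqGraph_comm_gridNode (h : IsSquareTiling T k top bot lef rig lam) (i : Fin (k + 2))
    (m : Fin (k + 1)) :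
    (sqGraph T k top bot lef rig).comm (gridNode lam h.1 i m.castSucc)
      (gridNode lam h.1 i m.succ) := by
  obtain ⟨-, hhor, -, -, -, hlef, hrig⟩ := h
  unfold gridNode
  split_ifs with h1 h2 h2 <;> simp only [Fin.val_castSucc, Fin.val_succ] at h1 h2 <;>
    simp only [sqGraph_comm_iff, sqComm0_inr_inr, sqComm0_inr_inl, sqComm0_inl_inr,
      sqComm0_inl_inl, or_false, false_or, true_and, and_true, Fin.val_castSucc, Fin.val_succ]
  · omega
  · exact Or.inl ⟨by omega, ⟨i - 1, by omega⟩, by dsimp only; omega, by omega,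
      hlef _ _ (by dsimp only; omega)⟩
  · exact Or.inr ⟨by omega, ⟨i - 1, by omega⟩, by dsimp only; omega, by omega,
      hrig _ _ (by dsimp only; omega)⟩
  · exact Or.inl ⟨by omega, hhor _ _ _ (by dsimp only; omega)⟩

theorem sqMove_gridNode (h : IsSquareTiling T k top bot lef rig lam) (i : Fin (k + 1))
    (j : Fin (k + 2)) :
    sqMove T k top bot (gridNode lam h.1 i.castSucc j) (gridNode lam h.1 i.succ j) := by
  obtain ⟨-, -, hver, hbot, htop, -, -⟩ := h
  unfold gridNode
  split_ifs with h1 h2 h2 <;> simp only [Fin.val_castSucc, Fin.val_succ] at h1 h2 <;>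
    simp only [sqMove_inr_inr, sqMove_inr_inl, sqMove_inl_inr, sqMove_inl_inl, Fin.val_castSucc,
      Fin.val_succ, true_and]
  · omega
  · exact ⟨by omega, by omega, hbot _ _ (by dsimp only; omega)⟩
  · exact ⟨by omega, by omega, htop _ _ (by dsimp only; omega)⟩
  · exact hver _ _ _ (by dsimp only; omega)

theorem reachableIn_of_isSquareTiling (h : IsSquareTiling T k top bot lef rig lam) :
    (sqGraph T k top bot lef rig).ReachableIn (sqGoal T k) (k + 2) := by
  refine ⟨k + 2, le_rfl, tilingRun lam h.1, ⟨fun t _ => ?_, fun t ht j => ?_⟩, fun _ => rfl, ?_⟩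
  · cases t with
    | zero => exact (sqGraph T k top bot lef rig).isConfig_base
    | succ t =>
      refine (sqGraph T k top bot lef rig).isConfig_of_chain (sqGraph_comm_base_gridNode h.1 _)
        (sqGraph_comm_gridNode h _) fun j j' hjj' => Fin.ext ?_
      simpa [tilingRun, sqCol_gridNode] using congrArg sqCol hjj'
  · cases t with
    | zero => exact sqMove_base_gridNode h.1 j
    | succ t =>
      have hclamp : Fin.clamp t (k + 1) = (⟨t, by omega⟩ : Fin (k + 1)).castSucc ∧
          Fin.clamp (t + 1) (k + 1) = (⟨t, by omega⟩ : Fin (k + 1)).succ := by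
        constructor <;> ext <;> simp <;> omega
      simp only [tilingRun, hclamp]
      exact sqMove_gridNode h _ j
  · simp only [tilingRun, Fin.clamp_eq_last _ _ le_rfl, gridNode_last]

end Grid

end SquareReduction

theorem square_tiling_iff_bounded_reachable_general (T : Finset Tile) (k : ℕ)
    (top bot lef rig : Fin k → ℕ) :
    (∃ lam : Fin k → Fin k → Tile, IsSquareTiling T k top bot lef rig lam) ↔
    (sqGraph T k top bot lef rig).ReachableIn (sqGoal T k) (k + 2) :=
  ⟨fun ⟨_, h⟩ => reachableIn_of_isSquareTiling h, exists_isSquareTiling_of_reachableIn⟩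

/-- a square tiling for `(T, top, bot, left, right)` exists iff the goal
configuration `((k+1,0), …, (k+1,k+1))` is reachable in the square-reduction graph with
`k+2` UAVs by an execution of length at most `k+2`. -/
theorem square_tiling_iff_bounded_reachable (T : Finset Tile) (k : ℕ) (hk : 2 ≤ k)
    (top bot lef rig : Fin k → ℕ) :
    (∃ lam : Fin k → Fin k → Tile, IsSquareTiling T k top bot lef rig lam) ↔
    (sqGraph T k top bot lef rig).ReachableIn (sqGoal T k) (k + 2) :=
  square_tiling_iff_bounded_reachable_general T k top bot lef rig
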